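/- Let I and J be B-centrally nilpotent ideals of a left skew brace B, of classes n₀ and m₀ respectively. Then the ideal I+J is B-centrally nilpotent of class at most n₀ + m₀. -/

import Mathlib

universe u

/-- A left skew brace: a set with two group structures `(B,+)` and `(B,·)` sharing the
same identity element, satisfying `a·(b+c) = a·b - a + a·c`. -/
class SkewBrace (B : Type u) extends AddGroup B, Group B where
  zero_eq_one : (0 : B) = 1
  skew_distrib : ∀ a b c : B, a * (b + c) = a * b + (-a + a * c)

namespace SkewBrace

variable {B : Type u} [SkewBrace B]

/-- The star product `a ∗ b = -a + a·b - b`. -/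
def sbStar (a b : B) : B := -a + a * b + -b

/-- The additive commutator `[a,b]₊ = -a - b + a + b`. -/
def addCommutator (a b : B) : B := -a + -b + a + b

/-- The multiplicative commutator `[a,b]· = a⁻¹b⁻¹ab`. -/
def mulCommutator (a b : B) : B := a⁻¹ * b⁻¹ * a * b

/-- A subbrace: a subset that is a subgroup of both `(B,+)` and `(B,·)`. -/
structure IsSubbrace (S : Set B) : Prop where
  zero_mem : (0 : B) ∈ S
  add_mem : ∀ ⦃a b : B⦄, a ∈ S → b ∈ S → a + b ∈ S
  neg_mem : ∀ ⦃a : B⦄, a ∈ S → -a ∈ S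
  mul_mem : ∀ ⦃a b : B⦄, a ∈ S → b ∈ S → a * b ∈ S
  inv_mem : ∀ ⦃a : B⦄, a ∈ S → a⁻¹ ∈ S

/-- `J` is an ideal of the subbrace `S`: a subbrace of `S`, normal in `(S,+)` and
`(S,·)`, with `S ∗ J ⊆ J` and `J ∗ S ⊆ J`. -/
structure IsIdealIn (S J : Set B) : Prop where
  subset : J ⊆ S
  isSubbrace : IsSubbrace J
  add_conj_mem : ∀ ⦃b : B⦄, b ∈ S → ∀ ⦃a : B⦄, a ∈ J → b + a + -b ∈ J
  mul_conj_mem : ∀ ⦃b : B⦄, b ∈ S → ∀ ⦃a : B⦄, a ∈ J → b * a * b⁻¹ ∈ J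
  star_mem_left : ∀ ⦃b : B⦄, b ∈ S → ∀ ⦃a : B⦄, a ∈ J → sbStar b a ∈ J
  star_mem_right : ∀ ⦃a : B⦄, a ∈ J → ∀ ⦃b : B⦄, b ∈ S → sbStar a b ∈ J

/-- An ideal of the brace `B`. -/
def IsIdeal (J : Set B) : Prop := IsIdealIn (Set.univ : Set B) J

/-- A left ideal: a subbrace `L` with `B ∗ L ⊆ L`. -/
structure IsLeftIdeal (L : Set B) : Prop where
  isSubbrace : IsSubbrace L
  star_mem_left : ∀ (b : B), ∀ ⦃a : B⦄, a ∈ L → sbStar b a ∈ L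

/-- The ideal of `B` generated by a subset `E`. -/
def idealClosure (E : Set B) : Set B := ⋂₀ {I : Set B | IsIdeal I ∧ E ⊆ I}

/-- The subbrace of `B` generated by a subset `E`. -/
def subbraceClosure (E : Set B) : Set B := ⋂₀ {S : Set B | IsSubbrace S ∧ E ⊆ S}

/-- The set `X_{I,J} = [I,J]₊ ∪ [I,J]· ∪ {i·j - (i+j) : i ∈ I, j ∈ J}`. -/
def commSet (I J : Set B) : Set B :=
  (AddSubgroup.closure {x : B | ∃ i ∈ I, ∃ j ∈ J, x = addCommutator i j} : Set B) ∪
    (Subgroup.closure {x : B | ∃ i ∈ I, ∃ j ∈ J, x = mulCommutator i j} : Set B) ∪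
    {x : B | ∃ i ∈ I, ∃ j ∈ J, x = i * j + -(i + j)}

/-- The commutator ideal `[I,J]^B`: the ideal of `B` generated by `X_{I,J}`. -/
def commIdeal (I J : Set B) : Set B := idealClosure (commSet I J)

/-- The set `X ∗ Y = {x ∗ y : x ∈ X, y ∈ Y}`. -/
def starSet (X Y : Set B) : Set B := {z : B | ∃ x ∈ X, ∃ y ∈ Y, z = sbStar x y}

/-- The centre of the subbrace `S`. -/
def centreIn (S : Set B) : Set B :=
  {a ∈ S | ∀ b ∈ S, a + b = b + a ∧ a + b = a * b ∧ a + b = b * a}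

/-- The centre `ζ(B)` of the brace `B`. -/
def centre (B : Type u) [SkewBrace B] : Set B := centreIn (Set.univ : Set B)

/-- For ideals `J ≤ I` of the subbrace `S`: `I/J` is a central factor of `S`,
i.e. `I/J ≤ ζ(S/J)`. -/
def IsCentralFactorIn (S J I : Set B) : Prop :=
  ∀ ⦃a : B⦄, a ∈ I → ∀ ⦃b : B⦄, b ∈ S →
    -(a + b) + (b + a) ∈ J ∧ -(a + b) + a * b ∈ J ∧ -(a + b) + b * a ∈ J

/-- The subbrace `S` is centrally nilpotent of class at most `n`: there is a chain of
ideals `0 = I₀ ≤ I₁ ≤ … ≤ Iₙ = S` of `S` with `I_{k+1}/I_k ≤ ζ(S/I_k)`. -/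
def CentrallyNilpotentInOfClassLE (S : Set B) (n : ℕ) : Prop :=
  ∃ I : ℕ → Set B, I 0 = {0} ∧ I n = S ∧
    (∀ k ≤ n, IsIdealIn S (I k)) ∧
    (∀ k < n, I k ⊆ I (k + 1)) ∧
    (∀ k < n, IsCentralFactorIn S (I k) (I (k + 1)))

/-- The subbrace `S` is centrally nilpotent. -/
def CentrallyNilpotentIn (S : Set B) : Prop := ∃ n : ℕ, CentrallyNilpotentInOfClassLE S n

/-- The brace `B` is centrally nilpotent. -/
def CentrallyNilpotent (B : Type u) [SkewBrace B] : Prop :=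
  CentrallyNilpotentIn (Set.univ : Set B)

/-- The brace `B` is locally centrally-nilpotent: every finitely generated subbrace is
centrally nilpotent. -/
def LocallyCentrallyNilpotent (B : Type u) [SkewBrace B] : Prop :=
  ∀ E : Finset B, CentrallyNilpotentIn (subbraceClosure (E : Set B))

/-- The (finite) upper central series of `B`: `ζ₀(B) = 0` and
`ζ_{n+1}(B)/ζ_n(B) = ζ(B/ζ_n(B))`. -/
def zetaNat (B : Type u) [SkewBrace B] : ℕ → Set B
  | 0 => {0}
  | n + 1 =>
    {a : B | ∀ b : B, -(a + b) + (b + a) ∈ zetaNat B n ∧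
      -(a + b) + a * b ∈ zetaNat B n ∧ -(a + b) + b * a ∈ zetaNat B n}

/-- The transfinite upper central series of `B`. -/
noncomputable def zetaOrd (B : Type u) [SkewBrace B] (o : Ordinal.{u}) : Set B :=
  Ordinal.limitRecOn o ({0} : Set B)
    (fun _ Z =>
      {a : B | ∀ b : B, -(a + b) + (b + a) ∈ Z ∧ -(a + b) + a * b ∈ Z ∧ -(a + b) + b * a ∈ Z})
    (fun o _ ih => ⋃ (β : {β : Ordinal.{u} // β < o}), ih β.1 β.2)

/-- The brace `B` is hypercentral: the upper central series reaches `B`. -/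
def Hypercentral (B : Type u) [SkewBrace B] : Prop :=
  ∃ o : Ordinal.{u}, zetaOrd B o = Set.univ

/-- The largest ideal of `B` contained in `C`. -/
def idealCore (C : Set B) : Set B := ⋃₀ {I : Set B | IsIdeal I ∧ I ⊆ C}

/-- The lower `B`-central series of an ideal `I`:
`lowerCentralB I n = Γ_{n+1}(I)^B`, so `Γ₁(I)^B = I` and `Γ_{n+1}(I)^B = [Γ_n(I)^B, I]^B`. -/
def lowerCentralB (I : Set B) : ℕ → Set B
  | 0 => I
  | n + 1 => commIdeal (lowerCentralB I n) I

/-- `I` is a `B`-centrally nilpotent ideal. -/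
def BCentrallyNilpotent (I : Set B) : Prop := ∃ n : ℕ, lowerCentralB I n = {0}

/-- The derived series of an ideal with respect to `B`. -/
def derivedB (I : Set B) : ℕ → Set B
  | 0 => I
  | n + 1 => commIdeal (derivedB I n) (derivedB I n)

/-- The preimages in `B` of the derived series of `I/F` with respect to `B/F`. -/
def derivedModB (F I : Set B) : ℕ → Set B
  | 0 => I
  | n + 1 => idealClosure (commSet (derivedModB F I n) (derivedModB F I n) ∪ F)

/-- The Fitting ideal of `B`: the ideal generated by all `B`-centrally nilpotent ideals. -/
def FitIdeal (B : Type u) [SkewBrace B] : Set B :=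
  idealClosure (⋃₀ {I : Set B | IsIdeal I ∧ BCentrallyNilpotent I})

/-- The centraliser of an ideal `I`: the largest ideal `C` with `[C,I]^B = 0`. -/
def idealCentraliser (I : Set B) : Set B :=
  ⋃₀ {C : Set B | IsIdeal C ∧ commIdeal C I ⊆ {0}}

/-- The centraliser of a chief factor `Itop/Ibot`: the largest ideal `C` of `B` with
`[C, Itop]^B ≤ Ibot`. -/
def factorCentraliser (Itop Ibot : Set B) : Set B :=
  ⋃₀ {C : Set B | IsIdeal C ∧ commIdeal C Itop ⊆ Ibot}

/-- A maximal left ideal of `B`. -/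
def IsMaximalLeftIdeal (L : Set B) : Prop :=
  IsLeftIdeal L ∧ L ≠ Set.univ ∧
    ∀ L' : Set B, IsLeftIdeal L' → L ⊆ L' → L' = L ∨ L' = Set.univ

/-- The Frattini ideal of `B`. -/
def FratIdeal (B : Type u) [SkewBrace B] : Set B :=
  (⋂₀ {L : Set B | IsMaximalLeftIdeal L}) ∩ FitIdeal B

/-- The additive torsion set `T₊(B)`. -/
def addTorsion (B : Type u) [SkewBrace B] : Set B := {a : B | ∃ n : ℕ, 0 < n ∧ n • a = 0}

/-- The multiplicative torsion set `T·(B)`. -/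
def mulTorsion (B : Type u) [SkewBrace B] : Set B := {a : B | ∃ n : ℕ, 0 < n ∧ a ^ n = 1}

/-- The order of an element of a brace: the cardinality of the subbrace it generates
(`0` if infinite). -/
noncomputable def elemOrder (a : B) : ℕ := Nat.card ↥(subbraceClosure ({a} : Set B))

/-- `a` is a `π`-element: it is periodic and its order is a `π`-number. -/
def IsPiElement (π : Set ℕ) (a : B) : Prop :=
  0 < elemOrder a ∧ ∀ p : ℕ, p.Prime → p ∣ elemOrder a → p ∈ π

/-- The order of the coset `a + J` in the quotient brace modulo the ideal `J`:
the number of cosets of `J` in the subbrace generated by `a` together with `J`. -/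
noncomputable def elemOrderMod (J : Set B) (a : B) : ℕ :=
  Nat.card ↥((fun x : B => {y : B | -x + y ∈ J}) '' subbraceClosure ({a} ∪ J))

/-- The coset of `a` modulo the ideal `J` is a `π`-element of the quotient brace. -/
def IsPiElementMod (π : Set ℕ) (J : Set B) (a : B) : Prop :=
  0 < elemOrderMod J a ∧ ∀ p : ℕ, p.Prime → p ∣ elemOrderMod J a → p ∈ π

/-- A subideal: a finite chain `S = C₀ ⊴ C₁ ⊴ … ⊴ Cₙ = B`. -/
def IsSubideal (S : Set B) : Prop :=
  ∃ (n : ℕ) (C : ℕ → Set B), C 0 = S ∧ C n = Set.univ ∧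
    (∀ k ≤ n, IsSubbrace (C k)) ∧ ∀ k < n, IsIdealIn (C (k + 1)) (C k)

/-- An ascendant subbrace: an ordinal-indexed ascending chain from `S` to `B`. -/
def IsAscendant (S : Set B) : Prop :=
  ∃ (l : Ordinal.{u}) (C : Ordinal.{u} → Set B), C 0 = S ∧ C l = Set.univ ∧
    (∀ α ≤ l, IsSubbrace (C α)) ∧
    (∀ α < l, IsIdealIn (C (α + 1)) (C α)) ∧
    ∀ μ ≤ l, Order.IsSuccLimit μ → C μ = ⋃ β < μ, C β

/-- A serial subbrace: there is a complete chain of subbraces containing `S` and `B`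
in which each member is an ideal of its immediate successor. -/
def IsSerial (S : Set B) : Prop :=
  ∃ 𝒞 : Set (Set B), S ∈ 𝒞 ∧ Set.univ ∈ 𝒞 ∧
    (∀ D ∈ 𝒞, IsSubbrace D) ∧
    (∀ D ∈ 𝒞, ∀ E ∈ 𝒞, D ⊆ E ∨ E ⊆ D) ∧
    (∀ 𝒟 ⊆ 𝒞, 𝒟.Nonempty → ⋃₀ 𝒟 ∈ 𝒞 ∧ ⋂₀ 𝒟 ∈ 𝒞) ∧
    ∀ D ∈ 𝒞, ∀ E ∈ 𝒞, D ⊂ E → (∀ F ∈ 𝒞, ¬(D ⊂ F ∧ F ⊂ E)) → IsIdealIn E D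

/-- `S` is a maximal `p`-subgroup of `(B,+)`. -/
def IsMaxAddPSubgroup (p : ℕ) (S : AddSubgroup B) : Prop :=
  (∀ a ∈ S, ∃ k : ℕ, p ^ k • a = 0) ∧
    ∀ T : AddSubgroup B, (∀ a ∈ T, ∃ k : ℕ, p ^ k • a = 0) → S ≤ T → T = S

/-- `S` is a maximal `p`-subgroup of `(B,·)`. -/
def IsMaxMulPSubgroup (p : ℕ) (S : Subgroup B) : Prop :=
  (∀ a ∈ S, ∃ k : ℕ, a ^ p ^ k = 1) ∧
    ∀ T : Subgroup B, (∀ a ∈ T, ∃ k : ℕ, a ^ p ^ k = 1) → S ≤ T → T = S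

/-- Formal 2-polynomials of a brace: terms in two variables built from `+`, `-`, `·`,
inverse and the constant `0`. -/
inductive Poly2 : Type
  | X : Poly2
  | Y : Poly2
  | zero : Poly2
  | add : Poly2 → Poly2 → Poly2
  | neg : Poly2 → Poly2
  | mul : Poly2 → Poly2 → Poly2
  | inv : Poly2 → Poly2

/-- Evaluation of a formal 2-polynomial in a brace. -/
def Poly2.eval : Poly2 → B → B → B
  | .X, a, _ => a
  | .Y, _, b => b
  | .zero, _, _ => 0
  | .add p q, a, b => p.eval a b + q.eval a b
  | .neg p, a, b => -(p.eval a b)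
  | .mul p q, a, b => p.eval a b * q.eval a b
  | .inv p, a, b => (p.eval a b)⁻¹

/-- A 2-polynomial is absorbing if it vanishes whenever one variable is `0`. -/
def Poly2.Absorbing (p : Poly2) (B : Type u) [SkewBrace B] : Prop :=
  (∀ x : B, p.eval x (0 : B) = 0) ∧ ∀ y : B, p.eval (0 : B) y = 0

end SkewBrace

namespace SkewBrace

variable {B : Type u} [SkewBrace B]

/-! ### Basic lambda calculus -/

/-- `λ_a(b) = -a + a·b`. -/
def lam (a b : B) : B := -a + a * b

lemma mul_eq_add_lam (a b : B) : a * b = a + lam a b := by simp [lam]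

lemma lam_add (a b c : B) : lam a (b + c) = lam a b + lam a c := by
  simp only [lam, skew_distrib, add_assoc]

lemma lam_zero (a : B) : lam a 0 = 0 := by
  simp [lam, zero_eq_one]

lemma lam_neg (a b : B) : lam a (-b) = -lam a b := by
  have h := lam_add a b (-b)
  rw [add_neg_cancel, lam_zero] at h
  exact (neg_eq_of_add_eq_zero_right h.symm).symm

lemma mul_neg' (a b : B) : a * (-b) = a + (-(a * b) + a) := by
  have h : -a + a * (-b) = -(a * b) + a := by
    have := lam_neg a b
    simp only [lam, neg_add_rev, neg_neg] at this
    exact this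
  rw [← h, ← add_assoc, add_neg_cancel, zero_add]

lemma lam_mul (a b c : B) : lam (a * b) c = lam a (lam b c) := by
  simp only [lam, skew_distrib, mul_neg', mul_assoc, add_assoc, neg_add_cancel_left,
    add_neg_cancel_left]

lemma lam_one (b : B) : lam (1 : B) b = b := by
  have h0 : (1 : B) = 0 := zero_eq_one.symm
  simp [lam, h0]

lemma lam_inv_cancel (a b : B) : lam a (lam a⁻¹ b) = b := by
  rw [← lam_mul, mul_inv_cancel, lam_one]

lemma add_eq_mul (a b : B) : a + b = a * lam a⁻¹ b := by
  rw [mul_eq_add_lam, lam_inv_cancel]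

lemma sbStar_eq_lam (a b : B) : sbStar a b = lam a b + -b := by
  simp [sbStar, lam, add_assoc]

lemma lam_eq_star_add (a b : B) : lam a b = sbStar a b + b := by
  simp [sbStar_eq_lam, add_assoc]

lemma star_add_right (a u v : B) :
    sbStar a (u + v) = sbStar a u + (u + sbStar a v + -u) := by
  simp only [sbStar_eq_lam, lam_add, neg_add_rev, add_assoc, neg_add_cancel_left]

lemma star_mul_left (x w z : B) :
    sbStar (x * w) z = lam x (sbStar w z) + sbStar x z := by
  rw [sbStar_eq_lam, lam_mul, lam_eq_star_add w z, lam_add, sbStar_eq_lam x z, add_assoc]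

lemma third_eq_conj_star (i j : B) : i * j + -(i + j) = i + sbStar i j + -i := by
  simp only [sbStar, neg_add_rev, add_assoc, add_neg_cancel_left]

lemma addCommutator_eq (i j : B) : addCommutator i j = -i + (-j + i + j) := by
  simp [addCommutator, add_assoc]

lemma addCommutator_eq' (i j : B) : addCommutator i j = (-i + -j + i) + j := by
  simp [addCommutator, add_assoc]

lemma mulCommutator_eq (i j : B) : mulCommutator i j = i⁻¹ * (j⁻¹ * i * j) := by
  simp [mulCommutator, mul_assoc]

lemma mulCommutator_eq' (i j : B) : mulCommutator i j = (i⁻¹ * j⁻¹ * i) * j := by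
  simp [mulCommutator, mul_assoc]

lemma addCommutator_add_right (i u v : B) :
    addCommutator i (u + v) = addCommutator i v + (-v + addCommutator i u + v) := by
  simp only [addCommutator, neg_add_rev, add_assoc, neg_add_cancel_left, add_neg_cancel_left]

lemma addCommutator_add_left (x y z : B) :
    addCommutator (x + y) z = (-y + addCommutator x z + y) + addCommutator y z := by
  simp only [addCommutator, neg_add_rev, add_assoc, neg_add_cancel_left, add_neg_cancel_left]

lemma mulCommutator_mul_right (i u w : B) :
    mulCommutator i (u * w) = mulCommutator i w * (w⁻¹ * mulCommutator i u * w) := by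
  simp only [mulCommutator]; group

lemma mulCommutator_mul_left (x w z : B) :
    mulCommutator (x * w) z = (w⁻¹ * mulCommutator x z * w) * mulCommutator w z := by
  simp only [mulCommutator]; group

end SkewBrace
namespace SkewBrace

variable {B : Type u} [SkewBrace B]

/-! ### Subbraces and ideals: basic lemmas -/

/-- The additive subgroup attached to a subbrace. -/
def IsSubbrace.toAddSubgroup {S : Set B} (h : IsSubbrace S) : AddSubgroup B where
  carrier := S
  add_mem' := fun ha hb => h.add_mem ha hb
  zero_mem' := h.zero_mem
  neg_mem' := fun ha => h.neg_mem ha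

/-- The multiplicative subgroup attached to a subbrace. -/
def IsSubbrace.toSubgroup {S : Set B} (h : IsSubbrace S) : Subgroup B where
  carrier := S
  mul_mem' := fun ha hb => h.mul_mem ha hb
  one_mem' := by rw [← zero_eq_one]; exact h.zero_mem
  inv_mem' := fun ha => h.inv_mem ha

namespace IsIdeal

lemma sub {X : Set B} (hX : IsIdeal X) : IsSubbrace X := IsIdealIn.isSubbrace hX

lemma zero_mem {X : Set B} (hX : IsIdeal X) : (0 : B) ∈ X := hX.sub.zero_mem

lemma add_mem {X : Set B} (hX : IsIdeal X) {a b : B} (ha : a ∈ X) (hb : b ∈ X) :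
    a + b ∈ X := hX.sub.add_mem ha hb

lemma neg_mem {X : Set B} (hX : IsIdeal X) {a : B} (ha : a ∈ X) : -a ∈ X := hX.sub.neg_mem ha

lemma mul_mem {X : Set B} (hX : IsIdeal X) {a b : B} (ha : a ∈ X) (hb : b ∈ X) :
    a * b ∈ X := hX.sub.mul_mem ha hb

lemma inv_mem {X : Set B} (hX : IsIdeal X) {a : B} (ha : a ∈ X) : a⁻¹ ∈ X := hX.sub.inv_mem ha

lemma conj_add {X : Set B} (hX : IsIdeal X) (b : B) {a : B} (ha : a ∈ X) : b + a + -b ∈ X :=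
  IsIdealIn.add_conj_mem hX (Set.mem_univ b) ha

lemma conj_add' {X : Set B} (hX : IsIdeal X) (b : B) {a : B} (ha : a ∈ X) : -b + a + b ∈ X := by
  simpa using hX.conj_add (-b) ha

lemma conj_mul {X : Set B} (hX : IsIdeal X) (b : B) {a : B} (ha : a ∈ X) : b * a * b⁻¹ ∈ X :=
  IsIdealIn.mul_conj_mem hX (Set.mem_univ b) ha

lemma conj_mul' {X : Set B} (hX : IsIdeal X) (b : B) {a : B} (ha : a ∈ X) : b⁻¹ * a * b ∈ X := by
  simpa using hX.conj_mul b⁻¹ ha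

lemma star_left {X : Set B} (hX : IsIdeal X) (b : B) {a : B} (ha : a ∈ X) : sbStar b a ∈ X :=
  IsIdealIn.star_mem_left hX (Set.mem_univ b) ha

lemma star_right {X : Set B} (hX : IsIdeal X) {a : B} (ha : a ∈ X) (b : B) : sbStar a b ∈ X :=
  IsIdealIn.star_mem_right hX ha (Set.mem_univ b)

lemma lam_mem {X : Set B} (hX : IsIdeal X) (b : B) {a : B} (ha : a ∈ X) : lam b a ∈ X := by
  rw [lam_eq_star_add]
  exact hX.add_mem (hX.star_left b ha) ha

end IsIdeal

lemma isIdeal_univ : IsIdeal (Set.univ : Set B) :=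
  ⟨fun _ _ => trivial,
    ⟨trivial, fun _ _ _ _ => trivial, fun _ _ => trivial, fun _ _ _ _ => trivial,
      fun _ _ => trivial⟩,
    fun _ _ _ _ => trivial, fun _ _ _ _ => trivial, fun _ _ _ _ => trivial,
    fun _ _ _ _ => trivial⟩

lemma neg_one_eq_one : -(1 : B) = 1 := by
  rw [← zero_eq_one]; exact neg_zero

lemma sbStar_zero_left (b : B) : sbStar (0 : B) b = 0 := by
  have h0 : (0 : B) = 1 := zero_eq_one
  simp [sbStar, h0, neg_one_eq_one]

lemma sbStar_zero_right (b : B) : sbStar b (0 : B) = 0 := by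
  have h1 : ((0 : B) : B) = 1 := zero_eq_one
  simp [sbStar, h1]

lemma isIdeal_zero : IsIdeal ({0} : Set B) := by
  have h0 : (0 : B) = 1 := zero_eq_one
  refine ⟨fun _ _ => trivial, ⟨rfl, ?_, ?_, ?_, ?_⟩, ?_, ?_, ?_, ?_⟩
  · intro a b ha hb
    simp only [Set.mem_singleton_iff] at ha hb ⊢
    subst ha; subst hb; simp
  · intro a ha
    simp only [Set.mem_singleton_iff] at ha ⊢
    subst ha; simp
  · intro a b ha hb
    simp only [Set.mem_singleton_iff] at ha hb ⊢
    subst ha; subst hb; rw [h0, mul_one]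
  · intro a ha
    simp only [Set.mem_singleton_iff] at ha ⊢
    subst ha; rw [h0, inv_one]
  · intro b _ a ha
    simp only [Set.mem_singleton_iff] at ha ⊢
    subst ha; simp
  · intro b _ a ha
    simp only [Set.mem_singleton_iff] at ha ⊢
    subst ha; rw [h0, mul_one, mul_inv_cancel]
  · intro b _ a ha
    simp only [Set.mem_singleton_iff] at ha ⊢
    subst ha; exact sbStar_zero_right b
  · intro a ha b _
    simp only [Set.mem_singleton_iff] at ha ⊢
    subst ha; exact sbStar_zero_left b

/-! ### The ideal closure -/

lemma mem_idealClosure {E : Set B} {a : B} :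
    a ∈ idealClosure E ↔ ∀ I : Set B, IsIdeal I → E ⊆ I → a ∈ I := by
  simp [idealClosure, Set.mem_sInter, and_imp]

lemma subset_idealClosure (E : Set B) : E ⊆ idealClosure E := by
  intro a ha
  exact mem_idealClosure.mpr fun I _ hE => hE ha

lemma idealClosure_min {E I : Set B} (hI : IsIdeal I) (hE : E ⊆ I) : idealClosure E ⊆ I :=
  Set.sInter_subset_of_mem ⟨hI, hE⟩

lemma isIdeal_idealClosure (E : Set B) : IsIdeal (idealClosure E) := by
  refine ⟨fun _ _ => trivial, ⟨?_, ?_, ?_, ?_, ?_⟩, ?_, ?_, ?_, ?_⟩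
  · exact mem_idealClosure.mpr fun I hI _ => hI.zero_mem
  · intro a b ha hb
    exact mem_idealClosure.mpr fun I hI hE =>
      hI.add_mem (mem_idealClosure.mp ha I hI hE) (mem_idealClosure.mp hb I hI hE)
  · intro a ha
    exact mem_idealClosure.mpr fun I hI hE => hI.neg_mem (mem_idealClosure.mp ha I hI hE)
  · intro a b ha hb
    exact mem_idealClosure.mpr fun I hI hE =>
      hI.mul_mem (mem_idealClosure.mp ha I hI hE) (mem_idealClosure.mp hb I hI hE)
  · intro a ha
    exact mem_idealClosure.mpr fun I hI hE => hI.inv_mem (mem_idealClosure.mp ha I hI hE)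
  · intro b _ a ha
    exact mem_idealClosure.mpr fun I hI hE => hI.conj_add b (mem_idealClosure.mp ha I hI hE)
  · intro b _ a ha
    exact mem_idealClosure.mpr fun I hI hE => hI.conj_mul b (mem_idealClosure.mp ha I hI hE)
  · intro b _ a ha
    exact mem_idealClosure.mpr fun I hI hE => hI.star_left b (mem_idealClosure.mp ha I hI hE)
  · intro a ha b _
    exact mem_idealClosure.mpr fun I hI hE => hI.star_right (mem_idealClosure.mp ha I hI hE) b

lemma idealClosure_mono {E F : Set B} (h : E ⊆ F) : idealClosure E ⊆ idealClosure F :=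
  idealClosure_min (isIdeal_idealClosure F) (h.trans (subset_idealClosure F))

end SkewBrace
namespace SkewBrace

variable {B : Type u} [SkewBrace B]

/-! ### The commutator ideal -/

lemma commSet_subset {X Y D : Set B} (hD : IsIdeal D)
    (h1 : ∀ i ∈ X, ∀ j ∈ Y, addCommutator i j ∈ D)
    (h2 : ∀ i ∈ X, ∀ j ∈ Y, mulCommutator i j ∈ D)
    (h3 : ∀ i ∈ X, ∀ j ∈ Y, i * j + -(i + j) ∈ D) :
    commSet X Y ⊆ D := by
  refine Set.union_subset (Set.union_subset ?_ ?_) ?_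
  · have : AddSubgroup.closure {x : B | ∃ i ∈ X, ∃ j ∈ Y, x = addCommutator i j} ≤
        hD.sub.toAddSubgroup := by
      rw [AddSubgroup.closure_le]
      rintro x ⟨i, hi, j, hj, rfl⟩
      exact h1 i hi j hj
    exact this
  · have : Subgroup.closure {x : B | ∃ i ∈ X, ∃ j ∈ Y, x = mulCommutator i j} ≤
        hD.sub.toSubgroup := by
      rw [Subgroup.closure_le]
      rintro x ⟨i, hi, j, hj, rfl⟩
      exact h2 i hi j hj
    exact this
  · rintro x ⟨i, hi, j, hj, rfl⟩
    exact h3 i hi j hj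

lemma commIdeal_subset {X Y D : Set B} (hD : IsIdeal D)
    (h1 : ∀ i ∈ X, ∀ j ∈ Y, addCommutator i j ∈ D)
    (h2 : ∀ i ∈ X, ∀ j ∈ Y, mulCommutator i j ∈ D)
    (h3 : ∀ i ∈ X, ∀ j ∈ Y, i * j + -(i + j) ∈ D) :
    commIdeal X Y ⊆ D :=
  idealClosure_min hD (commSet_subset hD h1 h2 h3)

lemma isIdeal_commIdeal (X Y : Set B) : IsIdeal (commIdeal X Y) :=
  isIdeal_idealClosure _

lemma zero_mem_commIdeal (X Y : Set B) : (0 : B) ∈ commIdeal X Y :=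
  (isIdeal_commIdeal X Y).zero_mem

lemma commSet_mono {X X' Y Y' : Set B} (hX : X ⊆ X') (hY : Y ⊆ Y') :
    commSet X Y ⊆ commSet X' Y' := by
  have g1 : {x : B | ∃ i ∈ X, ∃ j ∈ Y, x = addCommutator i j} ⊆
      {x : B | ∃ i ∈ X', ∃ j ∈ Y', x = addCommutator i j} := by
    rintro x ⟨i, hi, j, hj, rfl⟩; exact ⟨i, hX hi, j, hY hj, rfl⟩
  have g2 : {x : B | ∃ i ∈ X, ∃ j ∈ Y, x = mulCommutator i j} ⊆
      {x : B | ∃ i ∈ X', ∃ j ∈ Y', x = mulCommutator i j} := by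
    rintro x ⟨i, hi, j, hj, rfl⟩; exact ⟨i, hX hi, j, hY hj, rfl⟩
  refine Set.union_subset_union (Set.union_subset_union ?_ ?_) ?_
  · exact AddSubgroup.closure_mono g1
  · exact Subgroup.closure_mono g2
  · rintro x ⟨i, hi, j, hj, rfl⟩; exact ⟨i, hX hi, j, hY hj, rfl⟩

lemma commIdeal_mono {X X' Y Y' : Set B} (hX : X ⊆ X') (hY : Y ⊆ Y') :
    commIdeal X Y ⊆ commIdeal X' Y' :=
  idealClosure_mono (commSet_mono hX hY)

/-- `[X,Y]^B ⊆ X` whenever `X` is an ideal of `B`. -/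
lemma commIdeal_subset_left {X : Set B} (hX : IsIdeal X) (Y : Set B) :
    commIdeal X Y ⊆ X := by
  refine commIdeal_subset hX ?_ ?_ ?_
  · intro i hi j _
    rw [addCommutator_eq]
    exact hX.add_mem (hX.neg_mem hi) (hX.conj_add' j hi)
  · intro i hi j _
    rw [mulCommutator_eq]
    exact hX.mul_mem (hX.inv_mem hi) (hX.conj_mul' j hi)
  · intro i hi j _
    rw [third_eq_conj_star]
    exact hX.conj_add i (hX.star_right hi j)

/-- `[X,Y]^B ⊆ Y` whenever `Y` is an ideal of `B`. -/
lemma commIdeal_subset_right (X : Set B) {Y : Set B} (hY : IsIdeal Y) :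
    commIdeal X Y ⊆ Y := by
  refine commIdeal_subset hY ?_ ?_ ?_
  · intro i _ j hj
    rw [addCommutator_eq']
    exact hY.add_mem (by simpa [add_assoc] using hY.conj_add' i (hY.neg_mem hj)) hj
  · intro i _ j hj
    rw [mulCommutator_eq']
    exact hY.mul_mem (by simpa [mul_assoc] using hY.conj_mul' i (hY.inv_mem hj)) hj
  · intro i _ j hj
    rw [third_eq_conj_star]
    exact hY.conj_add i (hY.star_left i hj)

/-! ### The lower central series -/

lemma isIdeal_lowerCentralB {I : Set B} (hI : IsIdeal I) (n : ℕ) :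
    IsIdeal (lowerCentralB I n) := by
  cases n with
  | zero => exact hI
  | succ n => exact isIdeal_commIdeal _ _

lemma lowerCentralB_succ_subset {I : Set B} (hI : IsIdeal I) (n : ℕ) :
    lowerCentralB I (n + 1) ⊆ lowerCentralB I n :=
  commIdeal_subset_left (isIdeal_lowerCentralB hI n) I

lemma lowerCentralB_antitone {I : Set B} (hI : IsIdeal I) {m n : ℕ} (h : m ≤ n) :
    lowerCentralB I n ⊆ lowerCentralB I m := by
  induction n with
  | zero => simp_all
  | succ n ih =>
    rcases Nat.lt_or_ge m (n + 1) with h' | h'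
    · exact (lowerCentralB_succ_subset hI n).trans (ih (Nat.lt_succ_iff.mp h'))
    · have : m = n + 1 := le_antisymm h h'
      subst this; exact subset_rfl

end SkewBrace
namespace SkewBrace

variable {B : Type u} [SkewBrace B]

/-! ### Sums of ideals -/

/-- The sum of two ideals, as a set: `{x + y : x ∈ X, y ∈ Y}`. -/
def sumSet (X Y : Set B) : Set B := {z : B | ∃ x ∈ X, ∃ y ∈ Y, z = x + y}

lemma add_mem_sumSet {X Y : Set B} {x y : B} (hx : x ∈ X) (hy : y ∈ Y) :
    x + y ∈ sumSet X Y := ⟨x, hx, y, hy, rfl⟩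

lemma sumSet_subset_left {X Y : Set B} (hY : IsIdeal Y) : X ⊆ sumSet X Y := fun x hx =>
  ⟨x, hx, 0, hY.zero_mem, (add_zero x).symm⟩

lemma sumSet_subset_right {X Y : Set B} (hX : IsIdeal X) : Y ⊆ sumSet X Y := fun y hy =>
  ⟨0, hX.zero_mem, y, hy, (zero_add y).symm⟩

lemma sumSet_mono {X X' Y Y' : Set B} (hX : X ⊆ X') (hY : Y ⊆ Y') :
    sumSet X Y ⊆ sumSet X' Y' := by
  rintro z ⟨x, hx, y, hy, rfl⟩
  exact add_mem_sumSet (hX hx) (hY hy)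

lemma sumSet_subset {X Y M : Set B} (hM : IsIdeal M) (hX : X ⊆ M) (hY : Y ⊆ M) :
    sumSet X Y ⊆ M := by
  rintro z ⟨x, hx, y, hy, rfl⟩
  exact hM.add_mem (hX hx) (hY hy)

lemma swap_mem_sumSet {X Y : Set B} (hX : IsIdeal X) {x y : B} (hy : y ∈ Y) (hx : x ∈ X) :
    y + x ∈ sumSet X Y := by
  have h : y + x = (y + x + -y) + y := by simp [add_assoc]
  rw [h]
  exact add_mem_sumSet (hX.conj_add y hx) hy

lemma mul_mem_sumSet {X Y : Set B} (hY : IsIdeal Y) {x y : B} (hx : x ∈ X) (hy : y ∈ Y) :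
    x * y ∈ sumSet X Y := by
  rw [mul_eq_add_lam]
  exact add_mem_sumSet hx (hY.lam_mem x hy)

lemma mul_swap_mem_sumSet {X Y : Set B} (hX : IsIdeal X) {x y : B} (hy : y ∈ Y) (hx : x ∈ X) :
    y * x ∈ sumSet X Y := by
  rw [mul_eq_add_lam]
  exact swap_mem_sumSet hX hy (hX.lam_mem y hx)

lemma mem_sumSet_mul {X Y : Set B} (hX : IsIdeal X) (hY : IsIdeal Y) {z : B} :
    z ∈ sumSet X Y ↔ ∃ x ∈ X, ∃ y ∈ Y, z = x * y := by
  constructor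
  · rintro ⟨x, hx, y, hy, rfl⟩
    exact ⟨x, hx, lam x⁻¹ y, hY.lam_mem x⁻¹ hy, add_eq_mul x y⟩
  · rintro ⟨x, hx, y, hy, rfl⟩
    exact mul_mem_sumSet hY hx hy

lemma isIdeal_sumSet {X Y : Set B} (hX : IsIdeal X) (hY : IsIdeal Y) :
    IsIdeal (sumSet X Y) := by
  refine ⟨fun _ _ => trivial, ⟨?_, ?_, ?_, ?_, ?_⟩, ?_, ?_, ?_, ?_⟩
  · exact ⟨0, hX.zero_mem, 0, hY.zero_mem, (add_zero 0).symm⟩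
  · rintro _ _ ⟨x₁, hx₁, y₁, hy₁, rfl⟩ ⟨x₂, hx₂, y₂, hy₂, rfl⟩
    have h : x₁ + y₁ + (x₂ + y₂) = (x₁ + x₂) + ((-x₂ + y₁ + x₂) + y₂) := by
      simp [add_assoc]
    rw [h]
    exact add_mem_sumSet (hX.add_mem hx₁ hx₂) (hY.add_mem (hY.conj_add' x₂ hy₁) hy₂)
  · rintro _ ⟨x, hx, y, hy, rfl⟩
    have h : -(x + y) = -x + (x + -y + -x) := by simp [add_assoc]
    rw [h]
    exact add_mem_sumSet (hX.neg_mem hx) (hY.conj_add x (hY.neg_mem hy))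
  · intro a b ha hb
    rw [mem_sumSet_mul hX hY] at ha hb
    obtain ⟨x₁, hx₁, y₁, hy₁, rfl⟩ := ha
    obtain ⟨x₂, hx₂, y₂, hy₂, rfl⟩ := hb
    have h : y₁ * x₂ ∈ sumSet X Y := mul_swap_mem_sumSet hX hy₁ hx₂
    rw [mem_sumSet_mul hX hY] at h
    obtain ⟨x₃, hx₃, y₃, hy₃, he⟩ := h
    have h2 : x₁ * y₁ * (x₂ * y₂) = (x₁ * x₃) * (y₃ * y₂) := by
      have : x₁ * y₁ * (x₂ * y₂) = x₁ * (y₁ * x₂) * y₂ := by group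
      rw [this, he]; group
    rw [h2]
    exact mul_mem_sumSet hY (hX.mul_mem hx₁ hx₃) (hY.mul_mem hy₃ hy₂)
  · intro a ha
    rw [mem_sumSet_mul hX hY] at ha
    obtain ⟨x, hx, y, hy, rfl⟩ := ha
    rw [mul_inv_rev]
    exact mul_swap_mem_sumSet hX (hY.inv_mem hy) (hX.inv_mem hx)
  · rintro b _ _ ⟨x, hx, y, hy, rfl⟩
    have h : b + (x + y) + -b = (b + x + -b) + (b + y + -b) := by simp [add_assoc]
    rw [h]
    exact add_mem_sumSet (hX.conj_add b hx) (hY.conj_add b hy)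
  · intro b _ a ha
    rw [mem_sumSet_mul hX hY] at ha
    obtain ⟨x, hx, y, hy, rfl⟩ := ha
    have h : b * (x * y) * b⁻¹ = (b * x * b⁻¹) * (b * y * b⁻¹) := by group
    rw [h]
    exact mul_mem_sumSet hY (hX.conj_mul b hx) (hY.conj_mul b hy)
  · rintro b _ _ ⟨x, hx, y, hy, rfl⟩
    rw [star_add_right]
    exact add_mem_sumSet (hX.star_left b hx) (hY.conj_add x (hY.star_left b hy))
  · rintro _ ⟨x, hx, y, hy, rfl⟩ c _
    rw [add_eq_mul x y, star_mul_left]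
    exact swap_mem_sumSet hX
      (hY.lam_mem x (hY.star_right (hY.lam_mem x⁻¹ hy) c)) (hX.star_right hx c)

end SkewBrace
namespace SkewBrace

variable {B : Type u} [SkewBrace B]

/-- The additive subgroup with carrier `sumSet X Y`. -/
def sumAddSubgroup {X Y : Set B} (hX : IsIdeal X) (hY : IsIdeal Y) : AddSubgroup B :=
  ((isIdeal_sumSet hX hY).sub).toAddSubgroup

lemma closure_union_eq {X Y : Set B} (hX : IsIdeal X) (hY : IsIdeal Y) :
    ((AddSubgroup.closure (X ∪ Y) : AddSubgroup B) : Set B) = sumSet X Y := by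
  apply le_antisymm
  · have : AddSubgroup.closure (X ∪ Y) ≤ sumAddSubgroup hX hY := by
      rw [AddSubgroup.closure_le]
      exact Set.union_subset (sumSet_subset_left hY) (sumSet_subset_right hX)
    exact this
  · rintro z ⟨x, hx, y, hy, rfl⟩
    exact AddSubgroup.add_mem _
      (AddSubgroup.subset_closure (Set.mem_union_left _ hx))
      (AddSubgroup.subset_closure (Set.mem_union_right _ hy))

/-! ### Distributivity of the commutator ideal over sums -/

lemma commIdeal_sumSet_right {X Y Z : Set B} (hX : IsIdeal X) (hY : IsIdeal Y)
    (hZ : IsIdeal Z) :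
    commIdeal X (sumSet Y Z) ⊆ sumSet (commIdeal X Y) (commIdeal X Z) := by
  have hCY := isIdeal_commIdeal X Y
  have hCZ := isIdeal_commIdeal X Z
  have hD : IsIdeal (sumSet (commIdeal X Y) (commIdeal X Z)) := isIdeal_sumSet hCY hCZ
  have memY : ∀ w ∈ commIdeal X Y, w ∈ sumSet (commIdeal X Y) (commIdeal X Z) :=
    fun w hw => sumSet_subset_left hCZ hw
  have memZ : ∀ w ∈ commIdeal X Z, w ∈ sumSet (commIdeal X Y) (commIdeal X Z) :=
    fun w hw => sumSet_subset_right hCY hw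
  have starY : ∀ i ∈ X, ∀ u ∈ Y, sbStar i u ∈ sumSet (commIdeal X Y) (commIdeal X Z) := by
    intro i hi u hu
    have h3 : i * u + -(i + u) ∈ commIdeal X Y :=
      subset_idealClosure _ (Set.mem_union_right _ ⟨i, hi, u, hu, rfl⟩)
    have : sbStar i u = -i + (i * u + -(i + u)) + i := by
      rw [third_eq_conj_star]; simp [add_assoc]
    rw [this]
    exact memY _ (hCY.conj_add' i h3)
  have starZ : ∀ i ∈ X, ∀ u ∈ Z, sbStar i u ∈ sumSet (commIdeal X Y) (commIdeal X Z) := by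
    intro i hi u hu
    have h3 : i * u + -(i + u) ∈ commIdeal X Z :=
      subset_idealClosure _ (Set.mem_union_right _ ⟨i, hi, u, hu, rfl⟩)
    have : sbStar i u = -i + (i * u + -(i + u)) + i := by
      rw [third_eq_conj_star]; simp [add_assoc]
    rw [this]
    exact memZ _ (hCZ.conj_add' i h3)
  refine commIdeal_subset hD ?_ ?_ ?_
  · rintro i hi _ ⟨u, hu, v, hv, rfl⟩
    rw [addCommutator_add_right]
    have h1 : addCommutator i u ∈ commIdeal X Y :=
      subset_idealClosure _ (Set.mem_union_left _
        (Set.mem_union_left _ (AddSubgroup.subset_closure ⟨i, hi, u, hu, rfl⟩)))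
    have h2 : addCommutator i v ∈ commIdeal X Z :=
      subset_idealClosure _ (Set.mem_union_left _
        (Set.mem_union_left _ (AddSubgroup.subset_closure ⟨i, hi, v, hv, rfl⟩)))
    exact hD.add_mem (memZ _ h2) (hD.conj_add' v (memY _ h1))
  · rintro i hi _ ⟨u, hu, v, hv, rfl⟩
    rw [add_eq_mul u v, mulCommutator_mul_right]
    have hw : lam u⁻¹ v ∈ Z := hZ.lam_mem u⁻¹ hv
    have h1 : mulCommutator i u ∈ commIdeal X Y :=
      subset_idealClosure _ (Set.mem_union_left _
        (Set.mem_union_right _ (Subgroup.subset_closure ⟨i, hi, u, hu, rfl⟩)))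
    have h2 : mulCommutator i (lam u⁻¹ v) ∈ commIdeal X Z :=
      subset_idealClosure _ (Set.mem_union_left _
        (Set.mem_union_right _ (Subgroup.subset_closure ⟨i, hi, _, hw, rfl⟩)))
    exact hD.mul_mem (memZ _ h2) (hD.conj_mul' (lam u⁻¹ v) (memY _ h1))
  · rintro i hi _ ⟨u, hu, v, hv, rfl⟩
    rw [third_eq_conj_star, star_add_right]
    exact hD.conj_add i (hD.add_mem (starY i hi u hu) (hD.conj_add u (starZ i hi v hv)))

lemma commIdeal_sumSet_left {X Y Z : Set B} (hX : IsIdeal X) (hY : IsIdeal Y)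
    (hZ : IsIdeal Z) :
    commIdeal (sumSet X Y) Z ⊆ sumSet (commIdeal X Z) (commIdeal Y Z) := by
  have hCX := isIdeal_commIdeal X Z
  have hCY := isIdeal_commIdeal Y Z
  have hD : IsIdeal (sumSet (commIdeal X Z) (commIdeal Y Z)) := isIdeal_sumSet hCX hCY
  have memX : ∀ w ∈ commIdeal X Z, w ∈ sumSet (commIdeal X Z) (commIdeal Y Z) :=
    fun w hw => sumSet_subset_left hCY hw
  have memY : ∀ w ∈ commIdeal Y Z, w ∈ sumSet (commIdeal X Z) (commIdeal Y Z) :=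
    fun w hw => sumSet_subset_right hCX hw
  have starX : ∀ i ∈ X, ∀ u ∈ Z, sbStar i u ∈ sumSet (commIdeal X Z) (commIdeal Y Z) := by
    intro i hi u hu
    have h3 : i * u + -(i + u) ∈ commIdeal X Z :=
      subset_idealClosure _ (Set.mem_union_right _ ⟨i, hi, u, hu, rfl⟩)
    have : sbStar i u = -i + (i * u + -(i + u)) + i := by
      rw [third_eq_conj_star]; simp [add_assoc]
    rw [this]
    exact memX _ (hCX.conj_add' i h3)
  have starY : ∀ i ∈ Y, ∀ u ∈ Z, sbStar i u ∈ sumSet (commIdeal X Z) (commIdeal Y Z) := by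
    intro i hi u hu
    have h3 : i * u + -(i + u) ∈ commIdeal Y Z :=
      subset_idealClosure _ (Set.mem_union_right _ ⟨i, hi, u, hu, rfl⟩)
    have : sbStar i u = -i + (i * u + -(i + u)) + i := by
      rw [third_eq_conj_star]; simp [add_assoc]
    rw [this]
    exact memY _ (hCY.conj_add' i h3)
  refine commIdeal_subset hD ?_ ?_ ?_
  · rintro _ ⟨x, hx, y, hy, rfl⟩ z hz
    rw [addCommutator_add_left]
    have h1 : addCommutator x z ∈ commIdeal X Z :=
      subset_idealClosure _ (Set.mem_union_left _
        (Set.mem_union_left _ (AddSubgroup.subset_closure ⟨x, hx, z, hz, rfl⟩)))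
    have h2 : addCommutator y z ∈ commIdeal Y Z :=
      subset_idealClosure _ (Set.mem_union_left _
        (Set.mem_union_left _ (AddSubgroup.subset_closure ⟨y, hy, z, hz, rfl⟩)))
    exact hD.add_mem (hD.conj_add' y (memX _ h1)) (memY _ h2)
  · rintro _ ⟨x, hx, y, hy, rfl⟩ z hz
    rw [add_eq_mul x y, mulCommutator_mul_left]
    have hw : lam x⁻¹ y ∈ Y := hY.lam_mem x⁻¹ hy
    have h1 : mulCommutator x z ∈ commIdeal X Z :=
      subset_idealClosure _ (Set.mem_union_left _
        (Set.mem_union_right _ (Subgroup.subset_closure ⟨x, hx, z, hz, rfl⟩)))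
    have h2 : mulCommutator (lam x⁻¹ y) z ∈ commIdeal Y Z :=
      subset_idealClosure _ (Set.mem_union_left _
        (Set.mem_union_right _ (Subgroup.subset_closure ⟨_, hw, z, hz, rfl⟩)))
    exact hD.mul_mem (hD.conj_mul' (lam x⁻¹ y) (memX _ h1)) (memY _ h2)
  · rintro _ ⟨x, hx, y, hy, rfl⟩ z hz
    rw [third_eq_conj_star, add_eq_mul x y, star_mul_left]
    have hw : lam x⁻¹ y ∈ Y := hY.lam_mem x⁻¹ hy
    have h1 : sbStar (lam x⁻¹ y) z ∈ sumSet (commIdeal X Z) (commIdeal Y Z) :=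
      starY _ hw z hz
    have h2 : lam x (sbStar (lam x⁻¹ y) z) ∈ sumSet (commIdeal X Z) (commIdeal Y Z) :=
      hD.lam_mem x h1
    exact hD.conj_add _ (hD.add_mem h2 (starX x hx z hz))

end SkewBrace
namespace SkewBrace

variable {B : Type u} [SkewBrace B]

/-! ### Finite sums of ideals -/

/-- The sum of a finite list of ideals. -/
def idealSum : List (Set B) → Set B
  | [] => {0}
  | X :: L => sumSet X (idealSum L)

lemma isIdeal_idealSum {L : List (Set B)} (h : ∀ X ∈ L, IsIdeal X) : IsIdeal (idealSum L) := by
  induction L with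
  | nil => exact isIdeal_zero
  | cons X L ih =>
    exact isIdeal_sumSet (h X List.mem_cons_self) (ih fun Y hY => h Y (List.mem_cons_of_mem X hY))

lemma idealSum_subset {L : List (Set B)} {M : Set B} (hM : IsIdeal M) (h : ∀ X ∈ L, X ⊆ M) :
    idealSum L ⊆ M := by
  induction L with
  | nil => exact Set.singleton_subset_iff.mpr hM.zero_mem
  | cons X L ih =>
    exact sumSet_subset hM (h X List.mem_cons_self)
      (ih fun Y hY => h Y (List.mem_cons_of_mem X hY))

lemma subset_idealSum {L : List (Set B)} (hL : ∀ X ∈ L, IsIdeal X) {X : Set B} (hX : X ∈ L) :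
    X ⊆ idealSum L := by
  induction L with
  | nil => exact absurd hX List.not_mem_nil
  | cons Y L ih =>
    rcases List.mem_cons.mp hX with rfl | hX'
    · exact sumSet_subset_left (isIdeal_idealSum fun Z hZ => hL Z (List.mem_cons_of_mem X hZ))
    · exact (ih (fun Z hZ => hL Z (List.mem_cons_of_mem Y hZ)) hX').trans
        (sumSet_subset_right (hL Y List.mem_cons_self))

lemma commIdeal_idealSum {L : List (Set B)} (hL : ∀ X ∈ L, IsIdeal X) {Z : Set B}
    (hZ : IsIdeal Z) :
    commIdeal (idealSum L) Z ⊆ idealSum (L.map fun X => commIdeal X Z) := by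
  induction L with
  | nil => exact commIdeal_subset_left isIdeal_zero Z
  | cons X L ih =>
    have hX := hL X List.mem_cons_self
    have hL' : ∀ Y ∈ L, IsIdeal Y := fun Y hY => hL Y (List.mem_cons_of_mem X hY)
    calc commIdeal (sumSet X (idealSum L)) Z
        ⊆ sumSet (commIdeal X Z) (commIdeal (idealSum L) Z) :=
          commIdeal_sumSet_left hX (isIdeal_idealSum hL') hZ
      _ ⊆ sumSet (commIdeal X Z) (idealSum (L.map fun X => commIdeal X Z)) :=
          sumSet_mono subset_rfl (ih hL')

/-! ### The shifted lower central series -/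

/-- `shiftL I 0 = B` and `shiftL I (a+1) = Γ_{a+1}(I)^B = lowerCentralB I a`. -/
def shiftL (I : Set B) : ℕ → Set B
  | 0 => Set.univ
  | a + 1 => lowerCentralB I a

lemma isIdeal_shiftL {I : Set B} (hI : IsIdeal I) (a : ℕ) : IsIdeal (shiftL I a) := by
  cases a with
  | zero => exact isIdeal_univ
  | succ a => exact isIdeal_lowerCentralB hI a

lemma commIdeal_shiftL_left {I X : Set B} (hI : IsIdeal I) (a : ℕ) :
    commIdeal (shiftL I a ∩ X) I ⊆ shiftL I (a + 1) := by
  cases a with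
  | zero => exact commIdeal_subset_right _ hI
  | succ a =>
    exact commIdeal_mono Set.inter_subset_left subset_rfl

end SkewBrace

namespace SkewBrace

variable {B : Type u} [SkewBrace B]

lemma commIdeal_shiftL_right {J X : Set B} (hJ : IsIdeal J) (b : ℕ) :
    commIdeal (X ∩ shiftL J b) J ⊆ shiftL J (b + 1) := by
  cases b with
  | zero => exact commIdeal_subset_right _ hJ
  | succ b => exact commIdeal_mono Set.inter_subset_right subset_rfl

lemma isIdeal_inter {X Y : Set B} (hX : IsIdeal X) (hY : IsIdeal Y) : IsIdeal (X ∩ Y) := by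
  refine ⟨fun _ _ => trivial, ⟨⟨hX.zero_mem, hY.zero_mem⟩, ?_, ?_, ?_, ?_⟩, ?_, ?_, ?_, ?_⟩
  · exact fun a b ha hb => ⟨hX.add_mem ha.1 hb.1, hY.add_mem ha.2 hb.2⟩
  · exact fun a ha => ⟨hX.neg_mem ha.1, hY.neg_mem ha.2⟩
  · exact fun a b ha hb => ⟨hX.mul_mem ha.1 hb.1, hY.mul_mem ha.2 hb.2⟩
  · exact fun a ha => ⟨hX.inv_mem ha.1, hY.inv_mem ha.2⟩
  · exact fun b _ a ha => ⟨hX.conj_add b ha.1, hY.conj_add b ha.2⟩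
  · exact fun b _ a ha => ⟨hX.conj_mul b ha.1, hY.conj_mul b ha.2⟩
  · exact fun b _ a ha => ⟨hX.star_left b ha.1, hY.star_left b ha.2⟩
  · exact fun a ha b _ => ⟨hX.star_right ha.1 b, hY.star_right ha.2 b⟩

/-- The `n`-th approximating sum: `Σ_{a ≤ n+1} (shiftL I a ∩ shiftL J (n+1-a))`. -/
def approxSum (I J : Set B) (n : ℕ) : Set B :=
  idealSum ((List.range (n + 2)).map fun a => shiftL I a ∩ shiftL J (n + 1 - a))

lemma approxSum_ideals {I J : Set B} (hI : IsIdeal I) (hJ : IsIdeal J) (n : ℕ) :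
    ∀ X ∈ (List.range (n + 2)).map fun a => shiftL I a ∩ shiftL J (n + 1 - a), IsIdeal X := by
  intro X hX
  obtain ⟨a, _, rfl⟩ := List.mem_map.mp hX
  exact isIdeal_inter (isIdeal_shiftL hI a) (isIdeal_shiftL hJ (n + 1 - a))

lemma isIdeal_approxSum {I J : Set B} (hI : IsIdeal I) (hJ : IsIdeal J) (n : ℕ) :
    IsIdeal (approxSum I J n) :=
  isIdeal_idealSum (approxSum_ideals hI hJ n)

lemma entry_subset_approxSum {I J : Set B} (hI : IsIdeal I) (hJ : IsIdeal J) {n a : ℕ}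
    (ha : a < n + 2) :
    shiftL I a ∩ shiftL J (n + 1 - a) ⊆ approxSum I J n :=
  subset_idealSum (approxSum_ideals hI hJ n)
    (List.mem_map.mpr ⟨a, List.mem_range.mpr ha, rfl⟩)

lemma lowerCentralB_sum_subset {I J : Set B} (hI : IsIdeal I) (hJ : IsIdeal J) (n : ℕ) :
    lowerCentralB (sumSet I J) n ⊆ approxSum I J n := by
  induction n with
  | zero =>
    refine sumSet_subset (isIdeal_approxSum hI hJ 0) ?_ ?_
    · have h := entry_subset_approxSum hI hJ (n := 0) (a := 1) (by omega)
      refine subset_trans ?_ h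
      intro x hx; exact ⟨hx, trivial⟩
    · have h := entry_subset_approxSum hI hJ (n := 0) (a := 0) (by omega)
      refine subset_trans ?_ h
      intro x hx; exact ⟨trivial, hx⟩
  | succ n ih =>
    have step1 : lowerCentralB (sumSet I J) (n + 1) ⊆
        commIdeal (approxSum I J n) (sumSet I J) :=
      commIdeal_mono ih subset_rfl
    have step2 := commIdeal_idealSum (Z := sumSet I J)
      (approxSum_ideals hI hJ n) (isIdeal_sumSet hI hJ)
    refine step1.trans (step2.trans ?_)
    refine idealSum_subset (isIdeal_approxSum hI hJ (n + 1)) ?_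
    intro X hX
    obtain ⟨Y, hY, rfl⟩ := List.mem_map.mp hX
    obtain ⟨a, ha, rfl⟩ := List.mem_map.mp hY
    have ha' : a < n + 2 := List.mem_range.mp ha
    have hCa : IsIdeal (shiftL I a ∩ shiftL J (n + 1 - a)) :=
      isIdeal_inter (isIdeal_shiftL hI a) (isIdeal_shiftL hJ (n + 1 - a))
    refine (commIdeal_sumSet_right hCa hI hJ).trans ?_
    refine sumSet_subset (isIdeal_approxSum hI hJ (n + 1)) ?_ ?_
    · -- commIdeal (C a) I ⊆ entry (a+1) of approxSum (n+1)
      have h1 : commIdeal (shiftL I a ∩ shiftL J (n + 1 - a)) I ⊆ shiftL I (a + 1) :=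
        commIdeal_shiftL_left hI a
      have h2 : commIdeal (shiftL I a ∩ shiftL J (n + 1 - a)) I ⊆ shiftL J (n + 1 - a) :=
        (commIdeal_subset_left hCa I).trans Set.inter_subset_right
      have harith : n + 1 + 1 - (a + 1) = n + 1 - a := by omega
      refine subset_trans ?_ (entry_subset_approxSum hI hJ (n := n + 1) (a := a + 1) (by omega))
      rw [harith]
      exact Set.subset_inter h1 h2
    · -- commIdeal (C a) J ⊆ entry a of approxSum (n+1)
      have h1 : commIdeal (shiftL I a ∩ shiftL J (n + 1 - a)) J ⊆ shiftL I a :=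
        (commIdeal_subset_left hCa J).trans Set.inter_subset_left
      have h2 : commIdeal (shiftL I a ∩ shiftL J (n + 1 - a)) J ⊆ shiftL J (n + 1 - a + 1) :=
        commIdeal_shiftL_right hJ (n + 1 - a)
      have harith : n + 1 + 1 - a = n + 1 - a + 1 := by omega
      refine subset_trans ?_ (entry_subset_approxSum hI hJ (n := n + 1) (a := a) (by omega))
      rw [harith]
      exact Set.subset_inter h1 h2

end SkewBrace


open SkewBrace

/-- the sum of two `B`-centrally nilpotent ideals of classes `n₀` and `m₀`
is `B`-centrally nilpotent of class at most `n₀ + m₀`. -/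
theorem sum_BCentrallyNilpotent {B : Type u} [SkewBrace B] (I J : Set B)
    (hI : IsIdeal I) (hJ : IsIdeal J) (n₀ m₀ : ℕ)
    (hIn : lowerCentralB I n₀ = ({0} : Set B))
    (hIn' : ∀ m < n₀, lowerCentralB I m ≠ ({0} : Set B))
    (hJm : lowerCentralB J m₀ = ({0} : Set B))
    (hJm' : ∀ m < m₀, lowerCentralB J m ≠ ({0} : Set B)) :
    lowerCentralB ((AddSubgroup.closure (I ∪ J) : AddSubgroup B) : Set B) (n₀ + m₀)
      = ({0} : Set B) := by
  rw [closure_union_eq hI hJ]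
  have hK : IsIdeal (sumSet I J) := isIdeal_sumSet hI hJ
  apply le_antisymm
  · refine (lowerCentralB_sum_subset hI hJ (n₀ + m₀)).trans ?_
    refine idealSum_subset isIdeal_zero ?_
    intro X hX
    obtain ⟨a, ha, rfl⟩ := List.mem_map.mp hX
    have ha' : a < n₀ + m₀ + 2 := List.mem_range.mp ha
    rcases Nat.lt_or_ge a (n₀ + 1) with hle | hgt
    · -- a ≤ n₀, so the J-part has index ≥ m₀ + 1
      have hb : n₀ + m₀ + 1 - a = (n₀ + m₀ - a) + 1 := by omega
      have hb' : m₀ ≤ n₀ + m₀ - a := by omega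
      refine Set.inter_subset_right.trans ?_
      rw [hb]
      show lowerCentralB J (n₀ + m₀ - a) ⊆ {0}
      refine (lowerCentralB_antitone hJ hb').trans ?_
      rw [hJm]
    · -- a ≥ n₀ + 1, so the I-part has index ≥ n₀ + 1
      obtain ⟨a', rfl⟩ : ∃ a', a = a' + 1 := ⟨a - 1, by omega⟩
      have ha'' : n₀ ≤ a' := by omega
      refine Set.inter_subset_left.trans ?_
      show lowerCentralB I a' ⊆ {0}
      refine (lowerCentralB_antitone hI ha'').trans ?_
      rw [hIn]
  · exact Set.singleton_subset_iff.mpr (isIdeal_lowerCentralB hK (n₀ + m₀)).zero_mem
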